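/- Under the stated boundedness and strong Slater assumptions, let ξ̂ ∈ Ω(p̂) be any optimal solution, i.e. ξ̂_i = v(p̂). Then for every direction d ∈ ℝ^{n_p}, the one-sided limit lim_{t→0⁺} (v(p̂ + t·d) − v(p̂))/t exists, is finite, and equals the optimal value of the linear program: minimize w_i over w ∈ ℝ^{n_x} subject to ⟨∇_ξ g_k(ξ̂,p̂), w⟩ ≤ −⟨∇_p g_k(ξ̂,p̂), d⟩ for every k ∈ {1,…,n_g} with g_k(ξ̂,p̂) = 0, and A·w = −C·d. -/

import Mathlib

/-!
Near `p̂` the optimal value `v` is convex, being the infimum of a linear function over the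
fibres of a convex set of pairs `(ξ, p)`; hence the slope `(v (p̂ + t • d) - v p̂) / t` has a
limit `D` as `t → 0⁺`. For `t > 0` and `ξ` feasible at `p̂ + t • d`, the gradient inequality for
the convex constraints makes the difference quotient `(ξ - ξ̂) / t` feasible for the linear
program, so the value of the program is at most `D`. Conversely the Slater point gives a
direction `w₀` along which every active constraint strictly decreases: for an LP-feasible `w`
and `ε > 0`, the point `ξ̂ + t • (w + ε • w₀)` is feasible at `p̂ + t • d` for small `t`, so
`D ≤ wᵢ + ε w₀ᵢ`, and `ε → 0` gives `D ≤ wᵢ`.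
-/

open Matrix Set Filter Topology

theorem ConvexOn.fderiv_sub_le {E : Type*} [NormedAddCommGroup E] [NormedSpace ℝ E] {s : Set E}
    {f : E → ℝ} {x y : E} (hf : ConvexOn ℝ s f) (hx : x ∈ s) (hy : y ∈ s)
    (hd : DifferentiableAt ℝ f x) : fderiv ℝ f x (y - x) ≤ f y - f x := by
  have hline : HasDerivAt (f ∘ AffineMap.lineMap (k := ℝ) x y) (fderiv ℝ f x (y - x)) 0 :=
    hd.hasFDerivAt.comp_hasDerivAt_of_eq (0 : ℝ) AffineMap.hasDerivAt_lineMap (by simp)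
  have := (hf.comp_affineMap (AffineMap.lineMap (k := ℝ) x y)).le_slope_of_hasDerivAt
    (by simpa using hx) (by simpa using hy) one_pos hline
  simpa [slope_def_field] using this

theorem HasDerivAt.eventually_nhdsGT_lt {f : ℝ → ℝ} {f' x : ℝ} (hf : HasDerivAt f f' x)
    (hf' : f' < 0) : ∀ᶠ y in 𝓝[>] x, f y < f x := by
  have hslope : ∀ᶠ y in 𝓝[>] x, slope f x y < 0 :=
    ((hasDerivAt_iff_tendsto_slope.1 hf).mono_left (nhdsGT_le_nhdsNE x)).eventually_lt_const hf'
  filter_upwards [hslope, self_mem_nhdsWithin] with y hy hxy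
  rw [slope_def_field, div_lt_iff₀ (sub_pos.2 hxy), zero_mul] at hy
  linarith

theorem ConvexOn.tendsto_slope_nhdsGT {S : Set ℝ} {f : ℝ → ℝ} {x : ℝ} (hf : ConvexOn ℝ S f)
    (hS : S ∈ 𝓝 x) : Tendsto (slope f x) (𝓝[>] x) (𝓝 (derivWithin f (Ioi x) x)) := by
  have := hf.hasDerivWithinAt_rightDeriv_of_mem_interior (mem_interior_iff_mem_nhds.2 hS)
  rwa [hasDerivWithinAt_iff_tendsto_slope' self_notMem_Ioi] at this

theorem fderiv_apply_prod_eq_add {𝕜 E F G : Type*} [NontriviallyNormedField 𝕜]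
    [NormedAddCommGroup E] [NormedSpace 𝕜 E] [NormedAddCommGroup F] [NormedSpace 𝕜 F]
    [NormedAddCommGroup G] [NormedSpace 𝕜 G] {f : E × F → G} {x : E} {y : F}
    (hf : DifferentiableAt 𝕜 f (x, y)) (u : E) (w : F) :
    fderiv 𝕜 f (x, y) (u, w) =
      fderiv 𝕜 (fun ξ => f (ξ, y)) x u + fderiv 𝕜 (fun p => f (x, p)) y w := by
  have h₁ : HasFDerivAt (fun ξ => f (ξ, y)) ((fderiv 𝕜 f (x, y)).comp (.inl 𝕜 E F)) x :=
    hf.hasFDerivAt.comp x (hasFDerivAt_prodMk_left x y)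
  have h₂ : HasFDerivAt (fun p => f (x, p)) ((fderiv 𝕜 f (x, y)).comp (.inr 𝕜 E F)) y :=
    hf.hasFDerivAt.comp y (hasFDerivAt_prodMk_right x y)
  rw [h₁.fderiv, h₂.fderiv]
  simp [← map_add]

section ConstrainedSystem

variable {V H ι : Type*} [NormedAddCommGroup V] [NormedSpace ℝ V] [AddCommGroup H] [Module ℝ H]
  (L : V →ₗ[ℝ] H) (b : H) (G : ι → V → ℝ)

def feasibleSet : Set V := {q | L q + b = 0 ∧ ∀ k, G k q ≤ 0}

def linearizedCone (q : V) : Set V :=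
  {e | L e = 0 ∧ ∀ k, G k q = 0 → fderiv ℝ (G k) q e ≤ 0}

def strictLinearizedCone (q : V) : Set V :=
  {e | L e = 0 ∧ ∀ k, G k q = 0 → fderiv ℝ (G k) q e < 0}

variable {L b G}

theorem convex_feasibleSet (hG : ∀ k, ConvexOn ℝ univ (G k)) :
    Convex ℝ (feasibleSet L b G) := by
  have : feasibleSet L b G = L ⁻¹' {-b} ∩ ⋂ k, {q | q ∈ univ ∧ G k q ≤ 0} := by
    ext q; simp [feasibleSet, eq_neg_iff_add_eq_zero]
  rw [this]
  exact ((convex_singleton _).linear_preimage L).inter (convex_iInter fun k => (hG k).convex_le 0)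

theorem sub_mem_linearizedCone {q₀ q : V} (hG : ∀ k, ConvexOn ℝ univ (G k))
    (hGd : ∀ k, DifferentiableAt ℝ (G k) q₀) (hq₀ : q₀ ∈ feasibleSet L b G)
    (hq : q ∈ feasibleSet L b G) : q - q₀ ∈ linearizedCone L G q₀ := by
  refine ⟨by rw [map_sub, ← add_sub_add_right_eq_sub _ _ b, hq.1, hq₀.1, sub_zero],
    fun k hk => ?_⟩
  linarith [(hG k).fderiv_sub_le (mem_univ q₀) (mem_univ q) (hGd k), hq.2 k]

theorem sub_mem_strictLinearizedCone {q₀ q : V} (hG : ∀ k, ConvexOn ℝ univ (G k))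
    (hGd : ∀ k, DifferentiableAt ℝ (G k) q₀) (hq₀ : q₀ ∈ feasibleSet L b G)
    (hq : L q + b = 0) (hlt : ∀ k, G k q < 0) : q - q₀ ∈ strictLinearizedCone L G q₀ := by
  refine ⟨by rw [map_sub, ← add_sub_add_right_eq_sub _ _ b, hq, hq₀.1, sub_zero],
    fun k hk => ?_⟩
  linarith [(hG k).fderiv_sub_le (mem_univ q₀) (mem_univ q) (hGd k), hlt k]

theorem smul_mem_linearizedCone {q e : V} {c : ℝ} (hc : 0 ≤ c) (he : e ∈ linearizedCone L G q) :
    c • e ∈ linearizedCone L G q :=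
  ⟨by rw [map_smul, he.1, smul_zero], fun k hk => by
    rw [map_smul, smul_eq_mul]; exact mul_nonpos_of_nonneg_of_nonpos hc (he.2 k hk)⟩

theorem add_smul_mem_strictLinearizedCone {q e e₀ : V} {ε : ℝ} (he : e ∈ linearizedCone L G q)
    (he₀ : e₀ ∈ strictLinearizedCone L G q) (hε : 0 < ε) :
    e + ε • e₀ ∈ strictLinearizedCone L G q :=
  ⟨by rw [map_add, map_smul, he.1, he₀.1, smul_zero, add_zero], fun k hk => by
    rw [map_add, map_smul, smul_eq_mul]
    linarith [he.2 k hk, mul_neg_of_pos_of_neg hε (he₀.2 k hk)]⟩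

theorem eventually_add_smul_mem_feasibleSet [Finite ι] {q e : V}
    (hGd : ∀ k, DifferentiableAt ℝ (G k) q) (hq : q ∈ feasibleSet L b G)
    (he : e ∈ strictLinearizedCone L G q) :
    ∀ᶠ t in 𝓝[>] (0 : ℝ), q + t • e ∈ feasibleSet L b G := by
  have hk : ∀ k, ∀ᶠ t in 𝓝[>] (0 : ℝ), G k (q + t • e) < 0 := by
    intro k
    have hder : HasDerivAt (fun t : ℝ => G k (q + t • e)) (fderiv ℝ (G k) q e) 0 := by
      simpa [Function.comp_def] using (hGd k).hasFDerivAt.comp_hasDerivAt_of_eq (0 : ℝ)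
        (((hasDerivAt_id' (0 : ℝ)).smul_const e).const_add q) (by simp)
    rcases (hq.2 k).lt_or_eq with hlt | heq
    · exact nhdsWithin_le_nhds (hder.continuousAt.eventually_lt_const (by simpa using hlt))
    · simpa [heq] using hder.eventually_nhdsGT_lt (he.2 k heq)
  filter_upwards [eventually_all.2 hk] with t ht
  exact ⟨by rw [map_add, map_smul, he.1, smul_zero, add_right_comm, hq.1, zero_add],
    fun k => (ht k).le⟩

end ConstrainedSystem

section OptimalValue

variable {E F : Type*} [AddCommGroup E] [Module ℝ E]

/-- Junk value `0` when the fibre is empty or `ℓ` is unbounded below on it. -/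
noncomputable def optimalValue (S : Set (E × F)) (ℓ : E →ₗ[ℝ] ℝ) (p : F) : ℝ :=
  sInf (ℓ '' {ξ | (ξ, p) ∈ S})

variable {S : Set (E × F)} (ℓ : E →ₗ[ℝ] ℝ)

theorem optimalValue_le {p : F} {ξ : E} (hbdd : BddBelow (ℓ '' {ξ | (ξ, p) ∈ S}))
    (h : (ξ, p) ∈ S) : optimalValue S ℓ p ≤ ℓ ξ :=
  csInf_le hbdd ⟨ξ, h, rfl⟩

theorem exists_lt_optimalValue_add {p : F} (hne : ∃ ξ, (ξ, p) ∈ S) {ε : ℝ} (hε : 0 < ε) :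
    ∃ ξ, (ξ, p) ∈ S ∧ ℓ ξ < optimalValue S ℓ p + ε := by
  obtain ⟨_, ⟨ξ, hξ, rfl⟩, hlt⟩ := Real.lt_sInf_add_pos (Set.Nonempty.image ℓ hne) hε
  exact ⟨ξ, hξ, hlt⟩

theorem convexOn_optimalValue [AddCommGroup F] [Module ℝ F] {s : Set F} (hS : Convex ℝ S)
    (hs : Convex ℝ s) (hne : ∀ p ∈ s, ∃ ξ, (ξ, p) ∈ S)
    (hbdd : ∀ p ∈ s, BddBelow (ℓ '' {ξ | (ξ, p) ∈ S})) :
    ConvexOn ℝ s (optimalValue S ℓ) := by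
  refine ⟨hs, fun p hp p' hp' a a' ha ha' haa' => le_of_forall_pos_le_add fun ε hε => ?_⟩
  obtain ⟨ξ, hξ, hξε⟩ := exists_lt_optimalValue_add ℓ (hne p hp) hε
  obtain ⟨ξ', hξ', hξ'ε⟩ := exists_lt_optimalValue_add ℓ (hne p' hp') hε
  have hmem : (a • ξ + a' • ξ', a • p + a' • p') ∈ S := by simpa using hS hξ hξ' ha ha' haa'
  calc optimalValue S ℓ (a • p + a' • p')
      ≤ ℓ (a • ξ + a' • ξ') := optimalValue_le ℓ (hbdd _ (hs hp hp' ha ha' haa')) hmem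
    _ = a * ℓ ξ + a' * ℓ ξ' := by simp
    _ ≤ a * (optimalValue S ℓ p + ε) + a' * (optimalValue S ℓ p' + ε) := by gcongr
    _ = a • optimalValue S ℓ p + a' • optimalValue S ℓ p' + ε := by
      simp only [smul_eq_mul]; linear_combination ε * haa'

theorem slope_optimalValue_le [AddCommGroup F] [Module ℝ F] {p₀ d : F} {ξ₀ u : E} {t : ℝ}
    (ht : 0 < t) (hbdd : BddBelow (ℓ '' {ξ | (ξ, p₀ + t • d) ∈ S}))
    (hmem : (ξ₀ + t • u, p₀ + t • d) ∈ S) :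
    (optimalValue S ℓ (p₀ + t • d) - ℓ ξ₀) / t ≤ ℓ u := by
  rw [div_le_iff₀ ht]
  have := optimalValue_le ℓ hbdd hmem
  simp only [map_add, map_smul, smul_eq_mul] at this
  linarith

theorem csInf_image_le_slope_optimalValue [AddCommGroup F] [Module ℝ F] {K : Set E} {p₀ d : F}
    {ξ₀ : E} {t : ℝ} (ht : 0 < t) (hne : ∃ ξ, (ξ, p₀ + t • d) ∈ S)
    (hK : ∀ ξ, (ξ, p₀ + t • d) ∈ S → t⁻¹ • (ξ - ξ₀) ∈ K)
    (hKb : BddBelow (ℓ '' K)) :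
    sInf (ℓ '' K) ≤ (optimalValue S ℓ (p₀ + t • d) - ℓ ξ₀) / t := by
  rw [le_div_iff₀ ht, le_sub_iff_add_le]
  refine le_csInf (Set.Nonempty.image ℓ hne) (forall_mem_image.2 fun ξ hξ => ?_)
  have := csInf_le hKb (mem_image_of_mem ℓ (hK ξ hξ))
  rw [map_smul, map_sub, smul_eq_mul, le_inv_mul_iff₀ ht] at this
  linarith

end OptimalValue

theorem exists_tendsto_slope_optimalValue {E F : Type*} [AddCommGroup E] [Module ℝ E]
    [NormedAddCommGroup F] [NormedSpace ℝ F] {S : Set (E × F)} (ℓ : E →ₗ[ℝ] ℝ)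
    (hS : Convex ℝ S) {p₀ : F} {N : Set F} (hN : N ∈ 𝓝 p₀)
    (hne : ∀ p ∈ N, ∃ ξ, (ξ, p) ∈ S) (hbdd : ∀ p ∈ N, BddBelow (ℓ '' {ξ | (ξ, p) ∈ S}))
    (d : F) :
    ∃ D, Tendsto (fun t : ℝ => (optimalValue S ℓ (p₀ + t • d) - optimalValue S ℓ p₀) / t)
      (𝓝[>] 0) (𝓝 D) := by
  obtain ⟨r, hr, hball⟩ := Metric.mem_nhds_iff.1 hN
  have hconv := (convexOn_optimalValue ℓ hS (convex_ball p₀ r) (fun p hp => hne p (hball hp))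
    (fun p hp => hbdd p (hball hp))).comp_affineMap (AffineMap.lineMap p₀ (p₀ + d))
  have hnhds : AffineMap.lineMap p₀ (p₀ + d) ⁻¹' Metric.ball p₀ r ∈ 𝓝 (0 : ℝ) :=
    AffineMap.lineMap_continuous.continuousAt.preimage_mem_nhds
      (by simpa using Metric.ball_mem_nhds p₀ hr)
  refine ⟨_, (hconv.tendsto_slope_nhdsGT hnhds).congr fun t => ?_⟩
  simp [slope_def_field, AffineMap.lineMap_apply_module', add_comm]

theorem le_of_tendsto_slope_optimalValue {E F H ι : Type*} [NormedAddCommGroup E]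
    [NormedSpace ℝ E] [NormedAddCommGroup F] [NormedSpace ℝ F] [AddCommGroup H] [Module ℝ H]
    [Finite ι] {L : E × F →ₗ[ℝ] H} {b : H} {G : ι → E × F → ℝ} (ℓ : E →ₗ[ℝ] ℝ) {ξ₀ w₀ w : E}
    {p₀ d : F} {D : ℝ} (hGd : ∀ k, DifferentiableAt ℝ (G k) (ξ₀, p₀))
    (h₀ : (ξ₀, p₀) ∈ feasibleSet L b G) (hopt : ℓ ξ₀ = optimalValue (feasibleSet L b G) ℓ p₀)
    (hbdd : ∀ᶠ t in 𝓝[>] (0 : ℝ), BddBelow (ℓ '' {ξ | (ξ, p₀ + t • d) ∈ feasibleSet L b G}))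
    (hw₀ : (w₀, 0) ∈ strictLinearizedCone L G (ξ₀, p₀))
    (hD : Tendsto (fun t : ℝ => (optimalValue (feasibleSet L b G) ℓ (p₀ + t • d) -
      optimalValue (feasibleSet L b G) ℓ p₀) / t) (𝓝[>] 0) (𝓝 D))
    (hw : (w, d) ∈ linearizedCone L G (ξ₀, p₀)) : D ≤ ℓ w := by
  have hstrict : ∀ ε > 0, D ≤ ℓ w + ε * ℓ w₀ := fun ε hε => by
    have hu : (w + ε • w₀, d) ∈ strictLinearizedCone L G (ξ₀, p₀) := by
      simpa using add_smul_mem_strictLinearizedCone hw hw₀ hε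
    refine le_of_tendsto hD ?_
    filter_upwards [eventually_add_smul_mem_feasibleSet hGd h₀ hu, hbdd, self_mem_nhdsWithin]
      with t hmem htb ht
    rw [Prod.smul_mk, Prod.mk_add_mk] at hmem
    rw [← hopt, ← smul_eq_mul, ← map_smul, ← map_add]
    exact slope_optimalValue_le ℓ ht htb hmem
  have hlim : Tendsto (fun ε : ℝ => ℓ w + ε * ℓ w₀) (𝓝[>] 0) (𝓝 (ℓ w)) :=
    (Continuous.tendsto' (by fun_prop) 0 _ (by simp)).mono_left nhdsWithin_le_nhds
  exact ge_of_tendsto hlim (eventually_nhdsWithin_of_forall hstrict)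

theorem tendsto_slope_optimalValue {E F H ι : Type*} [NormedAddCommGroup E] [NormedSpace ℝ E]
    [NormedAddCommGroup F] [NormedSpace ℝ F] [AddCommGroup H] [Module ℝ H] [Finite ι]
    {L : E × F →ₗ[ℝ] H} {b : H} {G : ι → E × F → ℝ} (ℓ : E →ₗ[ℝ] ℝ) {ξ₀ : E} {p₀ : F}
    {N : Set F} (hG : ∀ k, ConvexOn ℝ univ (G k)) (hGd : ∀ k, DifferentiableAt ℝ (G k) (ξ₀, p₀))
    (hN : N ∈ 𝓝 p₀) (hne : ∀ p ∈ N, ∃ ξ, (ξ, p) ∈ feasibleSet L b G)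
    (hbdd : ∀ p ∈ N, BddBelow (ℓ '' {ξ | (ξ, p) ∈ feasibleSet L b G}))
    (hslater : ∃ ξ, L (ξ, p₀) + b = 0 ∧ ∀ k, G k (ξ, p₀) < 0)
    (h₀ : (ξ₀, p₀) ∈ feasibleSet L b G) (hopt : ℓ ξ₀ = optimalValue (feasibleSet L b G) ℓ p₀)
    (d : F) :
    let K := {w | (w, d) ∈ linearizedCone L G (ξ₀, p₀)}
    K.Nonempty ∧ BddBelow (ℓ '' K) ∧
      Tendsto (fun t : ℝ => (optimalValue (feasibleSet L b G) ℓ (p₀ + t • d) -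
        optimalValue (feasibleSet L b G) ℓ p₀) / t) (𝓝[>] 0) (𝓝 (sInf (ℓ '' K))) := by
  intro K
  have hNt : ∀ᶠ t in 𝓝[>] (0 : ℝ), p₀ + t • d ∈ N :=
    ((Continuous.tendsto' (by fun_prop) 0 p₀ (by simp)).mono_left nhdsWithin_le_nhds).eventually_mem
      hN
  have hK : ∀ t : ℝ, 0 < t → ∀ ξ, (ξ, p₀ + t • d) ∈ feasibleSet L b G → t⁻¹ • (ξ - ξ₀) ∈ K :=
    fun t ht ξ hξ => by
      simpa [K, ht.ne'] using
        smul_mem_linearizedCone (inv_nonneg.2 ht.le) (sub_mem_linearizedCone hG hGd h₀ hξ)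
  obtain ⟨ξs, hξs⟩ := hslater
  have hw₀ : (ξs - ξ₀, (0 : F)) ∈ strictLinearizedCone L G (ξ₀, p₀) := by
    simpa using sub_mem_strictLinearizedCone hG hGd h₀ hξs.1 hξs.2
  obtain ⟨D, hD⟩ := exists_tendsto_slope_optimalValue ℓ (convex_feasibleSet hG) hN hne hbdd d
  have hDle : ∀ w ∈ K, D ≤ ℓ w := fun w hw =>
    le_of_tendsto_slope_optimalValue ℓ hGd h₀ hopt (hNt.mono fun t ht => hbdd _ ht) hw₀ hD hw
  have hKne : K.Nonempty := by
    obtain ⟨t, htN, ht⟩ := (hNt.and self_mem_nhdsWithin).exists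
    obtain ⟨ξ, hξ⟩ := hne _ htN
    exact ⟨_, hK t ht ξ hξ⟩
  have hKbdd : BddBelow (ℓ '' K) := ⟨D, forall_mem_image.2 hDle⟩
  have hlow : ∀ᶠ t in 𝓝[>] (0 : ℝ), sInf (ℓ '' K) ≤
      (optimalValue (feasibleSet L b G) ℓ (p₀ + t • d) -
        optimalValue (feasibleSet L b G) ℓ p₀) / t := by
    filter_upwards [hNt, self_mem_nhdsWithin] with t htN ht
    rw [← hopt]
    exact csInf_image_le_slope_optimalValue ℓ ht (hne _ htN) (hK t ht) hKbdd
  have hD_eq : sInf (ℓ '' K) = D :=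
    le_antisymm (ge_of_tendsto hD hlow) (le_csInf (hKne.image ℓ) (forall_mem_image.2 hDle))
  exact ⟨hKne, hKbdd, hD_eq ▸ hD⟩

theorem optimal_value_directional_derivative_LP_general
    (nx np ng nh : ℕ)
    (g : Fin ng → (Fin nx → ℝ) → (Fin np → ℝ) → ℝ)
    (hg_smooth : ∀ k : Fin ng,
      ContDiff ℝ 1 (fun q : (Fin nx → ℝ) × (Fin np → ℝ) => g k q.1 q.2))
    (hg_convex : ∀ k : Fin ng,
      ConvexOn ℝ Set.univ (fun q : (Fin nx → ℝ) × (Fin np → ℝ) => g k q.1 q.2))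
    (A : Matrix (Fin nh) (Fin nx) ℝ) (C : Matrix (Fin nh) (Fin np) ℝ)
    (b : Fin nh → ℝ)
    (Ω : (Fin np → ℝ) → Set (Fin nx → ℝ))
    (hΩ : ∀ p, Ω p =
      {ξ | A.mulVec ξ + C.mulVec p + b = 0 ∧ ∀ k : Fin ng, g k ξ p ≤ 0})
    (i : Fin nx)
    (v : (Fin np → ℝ) → ℝ)
    (hv : ∀ p, v p = sInf ((fun ξ => ξ i) '' Ω p))
    (phat : Fin np → ℝ)
    (hbdd : ∃ R : ℝ, 0 < R ∧ ∀ p : Fin np → ℝ, ∀ ξ ∈ Ω p, ‖ξ‖ ≤ R)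
    (N : Set (Fin np → ℝ)) (hNopen : IsOpen N) (hpN : phat ∈ N)
    (hslater : ∀ p ∈ N, ∃ ξ : Fin nx → ℝ,
      A.mulVec ξ + C.mulVec p + b = 0 ∧ ∀ k : Fin ng, g k ξ p < 0)
    (ξhat : Fin nx → ℝ) (hξfeas : ξhat ∈ Ω phat) (hξopt : ξhat i = v phat)
    (W : (Fin np → ℝ) → Set (Fin nx → ℝ))
    (hW : ∀ d, W d = {w : Fin nx → ℝ |
      (∀ k : Fin ng, g k ξhat phat = 0 →
        fderiv ℝ (fun ξ => g k ξ phat) ξhat w ≤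
          -(fderiv ℝ (fun p => g k ξhat p) phat d)) ∧
      A.mulVec w = -(C.mulVec d)}) :
    ∀ d : Fin np → ℝ,
      (W d).Nonempty ∧ BddBelow ((fun w => w i) '' W d) ∧
      Tendsto (fun t : ℝ => (v (phat + t • d) - v phat) / t) (𝓝[>] 0)
        (𝓝 (sInf ((fun w => w i) '' W d))) := by
  intro d
  set G : Fin ng → (Fin nx → ℝ) × (Fin np → ℝ) → ℝ := fun k q => g k q.1 q.2
  set L : (Fin nx → ℝ) × (Fin np → ℝ) →ₗ[ℝ] Fin nh → ℝ :=
    A.mulVecLin ∘ₗ LinearMap.fst ℝ _ _ + C.mulVecLin ∘ₗ LinearMap.snd ℝ _ _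
  have hΩS : ∀ p, Ω p = {ξ | (ξ, p) ∈ feasibleSet L b G} := fun p => by
    ext ξ; simp [hΩ, feasibleSet, L, G]
  have hvS : ∀ p, v p = optimalValue (feasibleSet L b G) (LinearMap.proj i) p := fun p => by
    rw [hv, hΩS]; rfl
  have hGd : ∀ k, Differentiable ℝ (G k) := fun k => (hg_smooth k).differentiable one_ne_zero
  have hWK : W d = {w | (w, d) ∈ linearizedCone L G (ξhat, phat)} := by
    ext w
    simp only [hW, linearizedCone, mem_ofPred_eq, fderiv_apply_prod_eq_add (hGd _ _)]
    simp [L, G, le_neg_iff_add_nonpos_right, eq_neg_iff_add_eq_zero, and_comm]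
  have hne : ∀ p ∈ N, ∃ ξ, (ξ, p) ∈ feasibleSet L b G := fun p hp => by
    obtain ⟨ξ, hξ, hlt⟩ := hslater p hp
    exact ⟨ξ, by simpa [feasibleSet, L, G] using And.intro hξ fun k => (hlt k).le⟩
  obtain ⟨R, -, hR⟩ := hbdd
  have hbddS : ∀ p, BddBelow
      ((LinearMap.proj i : _ →ₗ[ℝ] ℝ) '' {ξ | (ξ, p) ∈ feasibleSet L b G}) := fun p =>
    ⟨-R, forall_mem_image.2 fun ξ hξ => neg_le_of_abs_le <| by
      simpa using (norm_le_pi_norm ξ i).trans (hR p ξ (by rwa [hΩS]))⟩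
  have := tendsto_slope_optimalValue (LinearMap.proj i) hg_convex (fun k => hGd k _)
    (hNopen.mem_nhds hpN) hne (fun p _ => hbddS p) (by simpa [G, L] using hslater phat hpN)
    (by rwa [hΩS] at hξfeas) (by rw [← hvS]; exact hξopt) d
  simpa [hWK, hvS] using this

/-- under boundedness and the strong Slater condition, the
directional derivative of the optimal-value function `v` at `p̂` in any direction
`d` exists, is finite, and equals the optimal value of an auxiliary linear
program built from any optimal solution `ξ̂` and the active constraints. -/
theorem optimal_value_directional_derivative_LP
    (nx np ng nh : ℕ) (hnx : 0 < nx) (hnp : 0 < np) (hng : 0 < ng) (hnh : 0 < nh)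
    (g : Fin ng → (Fin nx → ℝ) → (Fin np → ℝ) → ℝ)
    (hg_smooth : ∀ k : Fin ng,
      ContDiff ℝ 1 (fun q : (Fin nx → ℝ) × (Fin np → ℝ) => g k q.1 q.2))
    (hg_convex : ∀ k : Fin ng,
      ConvexOn ℝ Set.univ (fun q : (Fin nx → ℝ) × (Fin np → ℝ) => g k q.1 q.2))
    (A : Matrix (Fin nh) (Fin nx) ℝ) (C : Matrix (Fin nh) (Fin np) ℝ)
    (b : Fin nh → ℝ)
    (hA : LinearIndependent ℝ (fun j : Fin nh => A j))
    (Ω : (Fin np → ℝ) → Set (Fin nx → ℝ))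
    (hΩ : ∀ p, Ω p =
      {ξ | A.mulVec ξ + C.mulVec p + b = 0 ∧ ∀ k : Fin ng, g k ξ p ≤ 0})
    (i : Fin nx)
    (v : (Fin np → ℝ) → ℝ)
    (hv : ∀ p, v p = sInf ((fun ξ => ξ i) '' Ω p))
    (phat : Fin np → ℝ)
    (hbdd : ∃ R : ℝ, 0 < R ∧ ∀ p : Fin np → ℝ, ∀ ξ ∈ Ω p, ‖ξ‖ ≤ R)
    (N : Set (Fin np → ℝ)) (hNopen : IsOpen N) (hpN : phat ∈ N)
    (hslater : ∀ p ∈ N, ∃ ξ : Fin nx → ℝ,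
      A.mulVec ξ + C.mulVec p + b = 0 ∧ ∀ k : Fin ng, g k ξ p < 0)
    (ξhat : Fin nx → ℝ) (hξfeas : ξhat ∈ Ω phat) (hξopt : ξhat i = v phat)
    (W : (Fin np → ℝ) → Set (Fin nx → ℝ))
    (hW : ∀ d, W d = {w : Fin nx → ℝ |
      (∀ k : Fin ng, g k ξhat phat = 0 →
        fderiv ℝ (fun ξ => g k ξ phat) ξhat w ≤
          -(fderiv ℝ (fun p => g k ξhat p) phat d)) ∧
      A.mulVec w = -(C.mulVec d)}) :
    ∀ d : Fin np → ℝ,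
      (W d).Nonempty ∧ BddBelow ((fun w => w i) '' W d) ∧
      Tendsto (fun t : ℝ => (v (phat + t • d) - v phat) / t) (𝓝[>] 0)
        (𝓝 (sInf ((fun w => w i) '' W d))) :=
  optimal_value_directional_derivative_LP_general nx np ng nh g hg_smooth hg_convex A C b Ω hΩ i v
    hv phat hbdd N hNopen hpN hslater ξhat hξfeas hξopt W hW
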